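/- arXiv:2507.21643 — 3 statements merged into one kernel-verified Lean document; each statement's English description precedes it below -/
import Mathlib

section
/- For all nonnegative integers n and r, the r-partial deranged Bell numbers satisfy w̃_{n,r} = ∑_{k=r}^{n} C(n,k)·{k brace r}·w̃_{n-k}, where C(n,k) is the binomial coefficient. -/
/-- Stirling numbers of the second kind. -/
def stirling2 : ℕ → ℕ → ℕ
  | 0, 0 => 1
  | 0, _ + 1 => 0
  | _ + 1, 0 => 0
  | n + 1, k + 1 => (k + 1) * stirling2 n (k + 1) + stirling2 n k

/-- Derangement numbers `d_n = n! ∑_{i=0}^n (-1)^i / i!`. -/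
def derang (n : ℕ) : ℚ :=
  (n.factorial : ℚ) * ∑ i ∈ Finset.range (n + 1), (-1 : ℚ) ^ i / (i.factorial : ℚ)

/-- Partial derangement numbers `d_{n,r}`. -/
def pderang (n r : ℕ) : ℚ :=
  if r ≤ n then (n.choose r : ℚ) * derang (n - r) else 0

/-- Partial deranged Bell numbers `w̃_{n,r}`. -/
def pdb (n r : ℕ) : ℚ :=
  ∑ k ∈ Finset.range (n + 1), (stirling2 n k : ℚ) * pderang k r

/-
Putting `k = r + s`, `w̃_{n,r} = ∑_s C(r+s,r) {n brace r+s} d_s`. Marking `r` of the `r + s` blocks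
of a partition of an `n`-set amounts to choosing a `j`-subset partitioned into `r` blocks and
partitioning its complement into `s` blocks, so
`C(r+s,r) {n brace r+s} = ∑_j C(n,j) {j brace r} {n-j brace s}`; exchanging the two sums leaves
`∑_j C(n,j) {j brace r} w̃_{n-j}`.
-/

open Finset

namespace Nat

theorem sum_antidiagonal_choose_mul_stirlingSecond_mul_stirlingSecond (n r s : ℕ) :
    ∑ ij ∈ antidiagonal n, n.choose ij.1 * stirlingSecond ij.1 r * stirlingSecond ij.2 s =
      (r + s).choose r * stirlingSecond n (r + s) := by
  induction n generalizing r s with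
  | zero =>
    rcases r with _ | r <;> rcases s with _ | s <;>
      simp [stirlingSecond_eq_zero_of_lt]
  | succ n ih =>
    rcases r with _ | r
    · simp [Finset.Nat.sum_antidiagonal_succ]
    rcases s with _ | s
    · simp [Finset.Nat.sum_antidiagonal_succ']
    have hsplit := sum_antidiagonal_choose_succ_mul
      (fun i j => stirlingSecond i (r + 1) * stirlingSecond j (s + 1)) n
    simp only [← mul_assoc, Nat.cast_id] at hsplit
    have hleft : ∑ ij ∈ antidiagonal n,
        n.choose ij.1 * stirlingSecond ij.1 (r + 1) * stirlingSecond (ij.2 + 1) (s + 1) =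
          (s + 1) * ((r + 1 + (s + 1)).choose (r + 1) * stirlingSecond n (r + 1 + (s + 1))) +
            (r + 1 + s).choose (r + 1) * stirlingSecond n (r + 1 + s) := by
      rw [← ih, ← ih, mul_sum, ← sum_add_distrib]
      refine sum_congr rfl fun ij _ => ?_
      rw [stirlingSecond_succ_succ]
      ring
    have hright : ∑ ij ∈ antidiagonal n,
        n.choose ij.2 * stirlingSecond (ij.1 + 1) (r + 1) * stirlingSecond ij.2 (s + 1) =
          (r + 1) * ((r + 1 + (s + 1)).choose (r + 1) * stirlingSecond n (r + 1 + (s + 1))) +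
            (r + (s + 1)).choose r * stirlingSecond n (r + (s + 1)) := by
      rw [← ih, ← ih, mul_sum, ← sum_add_distrib]
      refine sum_congr rfl fun ij hij => ?_
      rw [stirlingSecond_succ_succ, choose_symm_of_eq_add (mem_antidiagonal.1 hij).symm]
      ring
    rw [hsplit, hleft, hright, show r + 1 + (s + 1) = r + s + 1 + 1 by ring,
      show r + 1 + s = r + s + 1 by ring, show r + (s + 1) = r + s + 1 by ring,
      stirlingSecond_succ_succ, choose_succ_succ (r + s + 1) r]
    ring

end Nat

theorem stirling2_eq_stirlingSecond : stirling2 = Nat.stirlingSecond := by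
  funext n k
  induction n generalizing k with
  | zero => cases k <;> rfl
  | succ n ih => cases k <;> simp [stirling2, Nat.stirlingSecond, ih]

theorem pderang_of_lt {n r : ℕ} (h : n < r) : pderang n r = 0 :=
  if_neg (Nat.not_le.2 h)

theorem pderang_add_left (r s : ℕ) : pderang (r + s) r = (r + s).choose r * derang s := by
  simp [pderang]

theorem pdb_eq_sum_range_of_le {n N : ℕ} (r : ℕ) (h : n ≤ N) :
    pdb n r = ∑ k ∈ range (N + 1), (n.stirlingSecond k : ℚ) * pderang k r := by
  rw [pdb, stirling2_eq_stirlingSecond]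
  refine sum_subset (range_subset_range.2 (by omega)) fun k hkN hkn => ?_
  rw [Nat.stirlingSecond_eq_zero_of_lt (by simp only [mem_range] at hkN hkn; omega),
    Nat.cast_zero, zero_mul]

theorem pdb_eq_sum_range_choose_mul_derang {n N : ℕ} (r : ℕ) (h : n ≤ N) :
    pdb n r = ∑ s ∈ range (N + 1),
      ((r + s).choose r * n.stirlingSecond (r + s) : ℕ) * derang s := by
  rw [pdb_eq_sum_range_of_le r (h.trans (N.le_add_left r)), add_assoc, sum_range_add,
    sum_eq_zero fun k hk => by rw [pderang_of_lt (mem_range.1 hk), mul_zero], zero_add]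
  refine sum_congr rfl fun s _ => ?_
  rw [pderang_add_left]
  push_cast
  ring

/-- `w̃_{n,r} = ∑_{k=r}^n C(n,k) {k brace r} w̃_{n-k}`, where `w̃_m = w̃_{m,0}`. -/
theorem pdb_eq_sum_choose_stirling_mul_pdb_zero (n r : ℕ) :
    pdb n r = ∑ k ∈ Finset.Icc r n, (n.choose k : ℚ) * (stirling2 k r : ℚ) * pdb (n - k) 0 := by
  calc pdb n r
      = ∑ s ∈ range (n + 1), ∑ ij ∈ antidiagonal n,
          (n.choose ij.1 * ij.1.stirlingSecond r : ℚ) * (ij.2.stirlingSecond s * derang s) := by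
        rw [pdb_eq_sum_range_choose_mul_derang r le_rfl]
        refine sum_congr rfl fun s _ => ?_
        rw [← Nat.sum_antidiagonal_choose_mul_stirlingSecond_mul_stirlingSecond, Nat.cast_sum,
          sum_mul]
        push_cast
        exact sum_congr rfl fun _ _ => by ring
    _ = ∑ ij ∈ antidiagonal n, (n.choose ij.1 * ij.1.stirlingSecond r : ℚ) * pdb ij.2 0 := by
        rw [sum_comm]
        refine sum_congr rfl fun ij hij => ?_
        rw [pdb_eq_sum_range_choose_mul_derang 0 (HasAntidiagonal.antidiagonal.snd_le hij),
          mul_sum]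
        simp
    _ = _ := by
        rw [Nat.sum_antidiagonal_eq_sum_range_succ_mk, stirling2_eq_stirlingSecond]
        refine (sum_subset (fun k hk => ?_) fun k hkn hkr => ?_).symm
        · simp only [mem_Icc, mem_range] at hk ⊢; omega
        · simp only [mem_range, mem_Icc] at hkn hkr
          rw [Nat.stirlingSecond_eq_zero_of_lt (by omega)]
          simp
end

section
/- For every nonnegative integer n, the deranged Bell number satisfies w̃_n = ∑_{r=0}^{n} ((-1)^r/r!)·(_r w_n), where _r w_n = ∑_{k=r}^{n} {n brace k}·k! are the truncated ordered Bell numbers (the identity holds in the rational numbers). -/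
/-- `w̃_n = ∑_{r=0}^n ((-1)^r / r!) ⬝ (_r w_n)` with
`_r w_n = ∑_{k=r}^n {n brace k} k!` the truncated ordered Bell numbers. -/
theorem pdb_zero_eq_sum_truncated_ordered_bell (n : ℕ) :
    pdb n 0 = ∑ r ∈ Finset.range (n + 1), (-1 : ℚ) ^ r / (r.factorial : ℚ) *
      ∑ k ∈ Finset.Icc r n, (stirling2 n k : ℚ) * (k.factorial : ℚ) := by
  have h : pdb n 0 = ∑ k ∈ Finset.range (n + 1), ∑ r ∈ Finset.range (n + 1),
      (if r ≤ k then (stirling2 n k : ℚ) * (k.factorial : ℚ) *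
        ((-1 : ℚ) ^ r / (r.factorial : ℚ)) else 0) := by
    unfold pdb pderang derang
    refine Finset.sum_congr rfl fun k hk => ?_
    have hk' : k ≤ n := by simpa [Nat.lt_succ_iff] using hk
    simp only [Nat.zero_le, if_true, Nat.choose_zero_right, Nat.cast_one, one_mul,
      Nat.sub_zero]
    rw [← Finset.sum_filter]
    have hfil : (Finset.range (n + 1)).filter (fun r => r ≤ k) = Finset.range (k + 1) := by
      ext r; simp only [Finset.mem_filter, Finset.mem_range]; omega
    rw [hfil, Finset.mul_sum, Finset.mul_sum]
    refine Finset.sum_congr rfl fun r _ => ?_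
    ring
  rw [h, Finset.sum_comm]
  refine Finset.sum_congr rfl fun r hr => ?_
  rw [← Finset.sum_filter]
  have hfil : (Finset.range (n + 1)).filter (fun k => r ≤ k) = Finset.Icc r n := by
    ext k; simp only [Finset.mem_filter, Finset.mem_range, Finset.mem_Icc]; omega
  rw [hfil, Finset.mul_sum]
  refine Finset.sum_congr rfl fun k _ => ?_
  ring
end

section
/- For all integers n ≥ r ≥ 0, w̃_{n,r} − (r+1)·w̃_{n,r+1} = ∑_{k=r}^{n} C(n,k)·{k brace r}·φ̃_{n−k}. In particular (r = 0), w̃_{n,0} − w̃_{n,1} = φ̃_n. -/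
/-- Complementary Bell numbers `φ̃_n = ∑_{k=0}^n (-1)^k {n brace k}`. -/
def cbell (n : ℕ) : ℚ :=
  ∑ k ∈ Finset.range (n + 1), (-1 : ℚ) ^ k * (stirling2 n k : ℚ)


lemma stirling2_succ_succ (n k : ℕ) :
    stirling2 (n+1) (k+1) = (k+1) * stirling2 n (k+1) + stirling2 n k := rfl

lemma stirling2_zero_right (k : ℕ) : stirling2 k 0 = if k = 0 then 1 else 0 := by
  cases k <;> simp [stirling2]

lemma stirling2_eq_zero_of_lt : ∀ n k, n < k → stirling2 n k = 0 := by
  intro n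
  induction n with
  | zero =>
    intro k h
    match k, h with
    | j + 1, _ => simp [stirling2]
  | succ n ih =>
    intro k h
    match k, h with
    | j + 1, h =>
      simp [stirling2_succ_succ, ih j (by omega), ih (j+1) (by omega)]

open Finset in
lemma stirling2_conv : ∀ n r s : ℕ, (r+s).choose r * stirling2 n (r+s) =
    ∑ k ∈ range (n+1), n.choose k * stirling2 k r * stirling2 (n-k) s := by
  intro n
  induction n with
  | zero => intro r s; cases r <;> cases s <;> simp [stirling2]
  | succ n ih =>
    intro r s
    cases r with
    | zero =>
      rw [Nat.zero_add, Nat.choose_zero_right, one_mul]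
      rw [Finset.sum_eq_single 0]
      · simp [stirling2]
      · intro k hk hk0
        rw [stirling2_zero_right, if_neg hk0]; ring
      · simp
    | succ r =>
      cases s with
      | zero =>
        rw [Finset.sum_eq_single (n+1)]
        · simp [stirling2]
        · intro k hk hk0
          have hk' : k ≤ n := by
            simp only [Finset.mem_range] at hk; omega
          have : n + 1 - k = (n - k) + 1 := by omega
          rw [this, stirling2_zero_right, if_neg (by omega)]; ring
        · simp
      | succ s =>
        have key : ∑ k ∈ range (n+1+1),
            (n+1).choose k * stirling2 k (r+1) * stirling2 (n+1-k) (s+1)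
            = (r+s+2) * (∑ k ∈ range (n+1), n.choose k * stirling2 k (r+1) * stirling2 (n-k) (s+1))
              + (∑ k ∈ range (n+1), n.choose k * stirling2 k r * stirling2 (n-k) (s+1))
              + (∑ k ∈ range (n+1), n.choose k * stirling2 k (r+1) * stirling2 (n-k) s) := by
          rw [Finset.sum_range_succ']
          have h0 : (n+1).choose 0 * stirling2 0 (r+1) * stirling2 (n+1-0) (s+1) = 0 := by
            rw [show stirling2 0 (r+1) = 0 from rfl]; ring
          rw [h0, add_zero]
          have hterm : ∀ i ∈ range (n+1),
              (n+1).choose (i+1) * stirling2 (i+1) (r+1) * stirling2 (n+1-(i+1)) (s+1)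
              = n.choose i * ((r+1) * stirling2 i (r+1)) * stirling2 (n-i) (s+1)
                + n.choose i * stirling2 i r * stirling2 (n-i) (s+1)
                + n.choose (i+1) * stirling2 (i+1) (r+1) * stirling2 (n-i) (s+1) := by
            intro i hi
            have : n + 1 - (i+1) = n - i := by omega
            rw [this, Nat.choose_succ_succ, stirling2_succ_succ]
            ring
          rw [Finset.sum_congr rfl hterm, Finset.sum_add_distrib, Finset.sum_add_distrib]
          have hU : ∑ i ∈ range (n+1), n.choose (i+1) * stirling2 (i+1) (r+1) * stirling2 (n-i) (s+1)
              = ∑ k ∈ range (n+1), n.choose k * stirling2 k (r+1) * stirling2 (n+1-k) (s+1) := by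
            have e1 := Finset.sum_range_succ'
              (fun k => n.choose k * stirling2 k (r+1) * stirling2 (n+1-k) (s+1)) (n+1)
            have e2 := Finset.sum_range_succ
              (fun k => n.choose k * stirling2 k (r+1) * stirling2 (n+1-k) (s+1)) (n+1)
            rw [show n.choose 0 * stirling2 0 (r+1) * stirling2 (n+1-0) (s+1) = 0 by
                rw [show stirling2 0 (r+1) = 0 from rfl]; ring, add_zero] at e1
            rw [show n.choose (n+1) * stirling2 (n+1) (r+1) * stirling2 (n+1-(n+1)) (s+1) = 0 by
                rw [Nat.choose_succ_self]; ring, add_zero] at e2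
            rw [e2] at e1
            rw [e1]
            apply Finset.sum_congr rfl
            intro i hi
            have : n + 1 - (i+1) = n - i := by omega
            rw [this]
          have hV : ∑ k ∈ range (n+1), n.choose k * stirling2 k (r+1) * stirling2 (n+1-k) (s+1)
              = (s+1) * (∑ k ∈ range (n+1), n.choose k * stirling2 k (r+1) * stirling2 (n-k) (s+1))
                + ∑ k ∈ range (n+1), n.choose k * stirling2 k (r+1) * stirling2 (n-k) s := by
            rw [Finset.mul_sum, ← Finset.sum_add_distrib]
            apply Finset.sum_congr rfl
            intro k hk
            simp only [Finset.mem_range] at hk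
            have : n + 1 - k = (n - k) + 1 := by omega
            rw [this, stirling2_succ_succ]
            ring
          have hA : ∑ i ∈ range (n+1), n.choose i * ((r+1) * stirling2 i (r+1)) * stirling2 (n-i) (s+1)
              = (r+1) * ∑ k ∈ range (n+1), n.choose k * stirling2 k (r+1) * stirling2 (n-k) (s+1) := by
            rw [Finset.mul_sum]
            apply Finset.sum_congr rfl
            intro k hk; ring
          rw [hU, hV, hA]
          ring
        rw [key, ← ih (r+1) (s+1), ← ih r (s+1), ← ih (r+1) s]
        have e1 : r + 1 + (s + 1) = (r + s + 1) + 1 := by omega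
        have e2 : r + (s+1) = r + s + 1 := by omega
        have e3 : r + 1 + s = r + s + 1 := by omega
        rw [e1, e2, e3, stirling2_succ_succ, Nat.choose_succ_succ (r+s+1) r]
        ring

lemma stirling2_conv_q (n r j : ℕ) :
    ((r+j).choose r : ℚ) * (stirling2 n (r+j) : ℚ)
      = ∑ k ∈ Finset.range (n+1), (n.choose k : ℚ) * stirling2 k r * stirling2 (n-k) j := by
  have := stirling2_conv n r j
  exact_mod_cast congrArg (fun x : ℕ => (x : ℚ)) this

lemma derang_zero : derang 0 = 1 := by simp [derang]

lemma derang_succ (m : ℕ) : derang (m+1) = (m+1) * derang m + (-1:ℚ)^(m+1) := by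
  unfold derang
  rw [Finset.sum_range_succ, mul_add]
  have hfac : ((m+1).factorial : ℚ) ≠ 0 := by positivity
  rw [mul_div_cancel₀ _ hfac]
  congr 1
  rw [Nat.factorial_succ]
  push_cast
  ring

lemma pderang_step (k r : ℕ) (h : r ≤ k) :
    pderang k r - (r+1 : ℚ) * pderang k (r+1) = (-1:ℚ)^(k-r) * (k.choose r : ℚ) := by
  rcases Nat.lt_or_ge r k with hlt | hge
  · -- r < k
    obtain ⟨t, ht⟩ : ∃ t, k - r = t + 1 := ⟨k - r - 1, by omega⟩
    have hkr1 : k - (r+1) = t := by omega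
    rw [pderang, pderang, if_pos h, if_pos (by omega), ht, hkr1, derang_succ]
    have h1 : k.choose (r+1) * (r+1) = k.choose r * (t+1) := by
      rw [Nat.choose_succ_right_eq, ht]
    have hchoose : ((r:ℚ)+1) * (k.choose (r+1) : ℚ) = ((t:ℚ)+1) * (k.choose r : ℚ) := by
      calc ((r:ℚ)+1) * (k.choose (r+1) : ℚ)
          = ((k.choose (r+1) * (r+1) : ℕ) : ℚ) := by push_cast; ring
        _ = ((k.choose r * (t+1) : ℕ) : ℚ) := by rw [h1]
        _ = ((t:ℚ)+1) * (k.choose r : ℚ) := by push_cast; ring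
    calc (k.choose r : ℚ) * (((t:ℚ)+1) * derang t + (-1)^(t+1)) - ((r:ℚ)+1) * ((k.choose (r+1) : ℚ) * derang t)
        = (k.choose r : ℚ) * (((t:ℚ)+1) * derang t + (-1)^(t+1)) - (((r:ℚ)+1) * (k.choose (r+1):ℚ)) * derang t := by ring
      _ = (k.choose r : ℚ) * (((t:ℚ)+1) * derang t + (-1)^(t+1)) - (((t:ℚ)+1) * (k.choose r:ℚ)) * derang t := by rw [hchoose]
      _ = (-1:ℚ)^(t+1) * (k.choose r : ℚ) := by ring
  · -- r = k
    have hk : r = k := by omega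
    subst hk
    rw [pderang, pderang, if_pos le_rfl, if_neg (by omega)]
    simp [derang_zero]

open Finset in
lemma main_lemma (n r : ℕ) (h : r ≤ n) :
    pdb n r - (r + 1 : ℚ) * pdb n (r + 1) =
      ∑ k ∈ Finset.Icc r n, (n.choose k : ℚ) * (stirling2 k r : ℚ) * cbell (n - k) := by
  have hfilter : (Finset.range (n+1)).filter (fun m => r ≤ m) = Finset.Icc r n := by
    ext m; simp [Nat.lt_succ_iff]; omega
  have step1 : pdb n r - (r+1:ℚ) * pdb n (r+1)
      = ∑ m ∈ range (n+1), if r ≤ m then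
          (-1:ℚ)^(m-r) * (m.choose r : ℚ) * (stirling2 n m : ℚ) else 0 := by
    unfold pdb
    rw [Finset.mul_sum, ← Finset.sum_sub_distrib]
    apply Finset.sum_congr rfl
    intro m hm
    by_cases hrm : r ≤ m
    · rw [if_pos hrm]
      have : (stirling2 n m : ℚ) * pderang m r - (r+1) * ((stirling2 n m : ℚ) * pderang m (r+1))
          = (stirling2 n m : ℚ) * (pderang m r - (r+1) * pderang m (r+1)) := by ring
      rw [this, pderang_step m r hrm]; ring
    · rw [if_neg hrm, pderang, pderang, if_neg hrm, if_neg (by omega)]; ring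
  rw [step1, ← Finset.sum_filter, hfilter]
  rw [show Finset.Icc r n = Finset.Ico r (n+1) by rw [Finset.Ico_add_one_right_eq_Icc]]
  rw [Finset.sum_Ico_eq_sum_range]
  have hidx : ∀ j, (r + j) - r = j := fun j => by omega
  have step2 : ∀ j ∈ range (n+1-r),
      (-1:ℚ)^((r+j)-r) * ((r+j).choose r : ℚ) * (stirling2 n (r+j) : ℚ)
      = ∑ k ∈ range (n+1), (-1:ℚ)^j * ((n.choose k : ℚ) * stirling2 k r * stirling2 (n-k) j) := by
    intro j hj
    rw [hidx j, mul_assoc, stirling2_conv_q, Finset.mul_sum]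
  rw [Finset.sum_congr rfl step2, Finset.sum_comm]
  -- now RHS side
  rw [show Finset.Ico r (n+1) = (Finset.range (n+1)).filter (fun m => r ≤ m) from by
      rw [hfilter, Finset.Ico_add_one_right_eq_Icc],
    Finset.sum_filter]
  apply Finset.sum_congr rfl
  intro k hk
  simp only [Finset.mem_range, Nat.lt_succ_iff] at hk
  by_cases hrk : r ≤ k
  · rw [if_pos hrk]
    unfold cbell
    rw [Finset.mul_sum]
    rw [Finset.sum_subset (Finset.range_subset_range.mpr (show n - k + 1 ≤ n + 1 - r by omega))]
    · apply Finset.sum_congr rfl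
      intro j hj; ring
    · intro j hj hj2
      simp only [Finset.mem_range] at hj hj2
      rw [stirling2_eq_zero_of_lt (n-k) j (by omega)]
      simp
  · rw [if_neg hrk]
    have : stirling2 k r = 0 := stirling2_eq_zero_of_lt k r (by omega)
    rw [this]
    simp

/-- For `n ≥ r ≥ 0`,
`w̃_{n,r} - (r+1) w̃_{n,r+1} = ∑_{k=r}^n C(n,k) {k brace r} φ̃_{n-k}`;
in particular `w̃_{n,0} - w̃_{n,1} = φ̃_n`. -/
theorem pdb_sub_succ_mul_pdb_succ (n r : ℕ) (h : r ≤ n) :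
    (pdb n r - (r + 1 : ℚ) * pdb n (r + 1) =
      ∑ k ∈ Finset.Icc r n, (n.choose k : ℚ) * (stirling2 k r : ℚ) * cbell (n - k)) ∧
    pdb n 0 - pdb n 1 = cbell n := by
  constructor
  · exact main_lemma n r h
  · have h0 := main_lemma n 0 (Nat.zero_le n)
    simp only [Nat.cast_zero, zero_add, one_mul] at h0
    rw [h0]
    rw [Finset.sum_eq_single 0]
    · simp [stirling2]
    · intro k hk hk0
      rw [stirling2_zero_right, if_neg hk0]
      simp
    · simp
end
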